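/- Suppose a probability measure μ on a Polish metric space satisfies Gozlan's dimension-free concentration: there exists c > 0 such that for all n ≥ 1, all 1-Lipschitz F: Ωⁿ → ℝ (w.r.t. the ℓ²-product metric) and all x > 0, μⁿ(|F − ∫F dμⁿ| > x) ≤ 2exp(−cx²). Then for the empirical measure μ_N = (1/N)∑_{n=1}^N δ_{X^n} of N i.i.d. samples X^n ∼ μ, one has P(|W₂(μ, μ_N) − E[W₂(μ, μ_N)]| ≥ x) ≤ 2exp(−c x² N) for all x > 0 and N ≥ 1. -/

import Mathlib

open MeasureTheory ENNReal

/-- `π` is a coupling of `μ` and `ν`. -/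
def IsCoupling {Ω : Type*} [MeasurableSpace Ω]
    (π : Measure (Ω × Ω)) (μ ν : Measure Ω) : Prop :=
  π.map Prod.fst = μ ∧ π.map Prod.snd = ν

/-- Squared 2-Wasserstein distance. -/
noncomputable def W2sq {Ω : Type*} [PseudoMetricSpace Ω] [MeasurableSpace Ω]
    (μ ν : Measure Ω) : ℝ≥0∞ :=
  ⨅ (π : Measure (Ω × Ω)) (_ : IsCoupling π μ ν), ∫⁻ p, edist p.1 p.2 ^ 2 ∂π

/-- The (real-valued) 2-Wasserstein distance. -/
noncomputable def W2 {Ω : Type*} [PseudoMetricSpace Ω] [MeasurableSpace Ω]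
    (μ ν : Measure Ω) : ℝ :=
  Real.sqrt (W2sq μ ν).toReal

/-- The empirical measure of the sample `y : Fin N → Ω`. -/
noncomputable def empMeasure {Ω : Type*} [MeasurableSpace Ω] {N : ℕ}
    (y : Fin N → Ω) : Measure Ω :=
  (N : ℝ≥0∞)⁻¹ • ∑ n : Fin N, Measure.dirac (y n)

/-!
Fix a coupling `π` of `μ` and the empirical measure of `z`. Disintegrating `π` along its second
coordinate lifts it to a measure `ρ` on `Ω × Fin N` whose second marginal is uniform and which
recovers `π` under `(ω, n) ↦ (ω, z n)`. Pushing `ρ` forward under `(ω, n) ↦ (ω, y n)` instead gives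
a coupling of `μ` and the empirical measure of `y`, and Minkowski's inequality in `L²(ρ)` for
`d(ω, y n) ≤ d(ω, z n) + d(z n, y n)` yields
`W₂(μ, μ_y) ≤ W₂(μ, μ_z) + (∑ₙ d(y n, z n)² / N)^{1/2}`.
So `√N · W₂(μ, μ_y)` is 1-Lipschitz for the `ℓ²` metric, and the concentration hypothesis applied
to it at level `√N · x` is the claim.
-/

section

variable {α β γ : Type*} [MeasurableSpace α] [MeasurableSpace β] [MeasurableSpace γ]

open ProbabilityTheory in
lemma map_prodMap_compProd_comap (ν : Measure γ) [SFinite ν] (κ : Kernel β α)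
    [IsSFiniteKernel κ] {z : γ → β} (hz : Measurable z) :
    (ν ⊗ₘ κ.comap z hz).map (Prod.map z id) = ν.map z ⊗ₘ κ := by
  ext s hs
  rw [Measure.map_apply (hz.prodMap measurable_id) hs, Measure.compProd_apply hs,
    Measure.compProd_apply (hz.prodMap measurable_id hs),
    lintegral_map (κ.measurable_kernel_prodMk_left hs) hz]
  rfl

open ProbabilityTheory in
/-- The measure `ρ` is `ν ⊗ₘ (η ∘ z)` with its factors swapped, where `η` is the conditional
distribution of the first coordinate of `π` given the second. -/
lemma exists_lift_of_map_snd_eq_map [StandardBorelSpace α] [Nonempty α]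
    {π : Measure (α × β)} [IsFiniteMeasure π] {ν : Measure γ} [SFinite ν]
    {z : γ → β} (hz : Measurable z) (h : π.map Prod.snd = ν.map z) :
    ∃ ρ : Measure (α × γ), ρ.map Prod.snd = ν ∧ ρ.map (Prod.map id z) = π := by
  set η := condDistrib Prod.fst Prod.snd π
  refine ⟨(ν ⊗ₘ η.comap z hz).map Prod.swap, ?_, ?_⟩
  · rw [Measure.map_map measurable_snd measurable_swap]
    exact Measure.fst_compProd ν _
  · have hdisintegrate : π.map Prod.snd ⊗ₘ η = π.map Prod.swap :=
      compProd_map_condDistrib measurable_fst.aemeasurable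
    rw [Measure.map_map (measurable_id.prodMap hz) measurable_swap,
      show Prod.map id z ∘ Prod.swap = Prod.swap ∘ Prod.map z (id : α → α) from rfl,
      ← Measure.map_map measurable_swap (hz.prodMap measurable_id),
      map_prodMap_compProd_comap ν η hz, ← h, hdisintegrate,
      Measure.map_map measurable_swap measurable_swap, Prod.swap_swap_eq, Measure.map_id]

lemma lintegral_sq_rpow_le_of_le_add {μ : Measure α} {f g h : α → ℝ≥0∞}
    (hg : AEMeasurable g μ) (hh : AEMeasurable h μ) (hfgh : ∀ x, f x ≤ g x + h x) :
    (∫⁻ x, f x ^ 2 ∂μ) ^ (1 / 2 : ℝ) ≤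
      (∫⁻ x, g x ^ 2 ∂μ) ^ (1 / 2 : ℝ) + (∫⁻ x, h x ^ 2 ∂μ) ^ (1 / 2 : ℝ) := by
  have hminkowski := ENNReal.lintegral_Lp_add_le hg hh one_le_two
  simp only [Pi.add_apply, ENNReal.rpow_two] at hminkowski
  refine le_trans ?_ hminkowski
  gcongr with x
  exact hfgh x

lemma ENNReal.abs_toReal_sub_toReal_le {a b e : ℝ≥0∞} (he : e ≠ ∞) (hab : a ≤ b + e)
    (hba : b ≤ a + e) : |a.toReal - b.toReal| ≤ e.toReal := by
  have top_of_top {c d : ℝ≥0∞} (hcd : c ≤ d + e) (hc : c = ∞) : d = ∞ :=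
    (ENNReal.add_eq_top.1 (top_le_iff.1 (hc ▸ hcd))).resolve_right he
  rw [abs_sub_le_iff, sub_le_iff_le_add', sub_le_iff_le_add']
  exact ⟨ENNReal.toReal_le_add' hab (top_of_top hba) (absurd · he),
    ENNReal.toReal_le_add' hba (top_of_top hab) (absurd · he)⟩

open Filter Topology in
lemma measure_setOf_le_le_of_forall_lt (μ : Measure α) (g : α → ℝ) {b : ℝ → ℝ≥0∞} {x : ℝ}
    (hb : ContinuousWithinAt b (Set.Iio x) x) (hx : 0 < x)
    (h : ∀ s ∈ Set.Ioo 0 x, μ {a | s < g a} ≤ b s) :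
    μ {a | x ≤ g a} ≤ b x := by
  refine ge_of_tendsto hb ?_
  filter_upwards [Ioo_mem_nhdsLT hx] with s hs
  exact (measure_mono fun a ha => hs.2.trans_le ha).trans (h s hs)

lemma map_empMeasure {Ω Ω' : Type*} [MeasurableSpace Ω] [MeasurableSpace Ω'] {N : ℕ}
    {f : Ω → Ω'} (hf : Measurable f) (y : Fin N → Ω) :
    (empMeasure y).map f = empMeasure (f ∘ y) := by
  simp only [empMeasure, Measure.map_smul, Measure.map_finset_sum' hf.aemeasurable,
    Measure.map_dirac' hf, Function.comp_apply]

lemma lintegral_empMeasure {Ω : Type*} [MeasurableSpace Ω] [MeasurableSingletonClass Ω] {N : ℕ}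
    (y : Fin N → Ω) (f : Ω → ℝ≥0∞) :
    ∫⁻ x, f x ∂(empMeasure y) = (∑ n, f (y n)) / N := by
  simp only [empMeasure, lintegral_smul_measure, lintegral_finsetSum_measure, lintegral_dirac,
    smul_eq_mul, ENNReal.div_eq_inv_mul]

lemma IsCoupling.isFiniteMeasure {Ω : Type*} [MeasurableSpace Ω] {π : Measure (Ω × Ω)}
    {μ ν : Measure Ω} [IsFiniteMeasure μ] (hπ : IsCoupling π μ ν) : IsFiniteMeasure π := by
  have : IsFiniteMeasure (π.map Prod.fst) := hπ.1 ▸ inferInstance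
  exact Measure.isFiniteMeasure_of_map measurable_fst.aemeasurable

lemma W2sq_rpow_eq_iInf {Ω : Type*} [PseudoMetricSpace Ω] [MeasurableSpace Ω]
    (μ ν : Measure Ω) :
    W2sq μ ν ^ (1 / 2 : ℝ) =
      ⨅ (π : Measure (Ω × Ω)) (_ : IsCoupling π μ ν), (∫⁻ p, edist p.1 p.2 ^ 2 ∂π) ^ (1 / 2 : ℝ) := by
  simp only [W2sq, ← ENNReal.orderIsoRpow_apply _ one_half_pos, OrderIso.map_iInf]

lemma W2_eq_toReal_rpow {Ω : Type*} [PseudoMetricSpace Ω] [MeasurableSpace Ω]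
    (μ ν : Measure Ω) : W2 μ ν = (W2sq μ ν ^ (1 / 2 : ℝ)).toReal := by
  rw [W2, Real.sqrt_eq_rpow, ENNReal.toReal_rpow]

lemma toReal_sum_edist_sq_div_rpow {Ω : Type*} [PseudoMetricSpace Ω] {N : ℕ} (y z : Fin N → Ω) :
    (((∑ n, edist (y n) (z n) ^ 2) / N) ^ (1 / 2 : ℝ)).toReal =
      √((∑ n, dist (y n) (z n) ^ 2) / N) := by
  rw [← ENNReal.toReal_rpow, ← Real.sqrt_eq_rpow, ENNReal.toReal_div,
    ENNReal.toReal_sum fun n _ => by finiteness]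
  simp [← dist_edist]

section Polish

variable {Ω : Type*} [MetricSpace Ω] [PolishSpace Ω] [MeasurableSpace Ω] [BorelSpace Ω]
  [Nonempty Ω] (μ : Measure Ω) [IsFiniteMeasure μ]

theorem W2sq_map_rpow_le_of_isCoupling (ν : Measure γ) [SFinite ν] {y z : γ → Ω}
    (hy : Measurable y) (hz : Measurable z) {π : Measure (Ω × Ω)} (hπ : IsCoupling π μ (ν.map z)) :
    W2sq μ (ν.map y) ^ (1 / 2 : ℝ) ≤
      (∫⁻ p, edist p.1 p.2 ^ 2 ∂π) ^ (1 / 2 : ℝ) +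
        (∫⁻ c, edist (z c) (y c) ^ 2 ∂ν) ^ (1 / 2 : ℝ) := by
  have hcost : Measurable fun p : Ω × Ω => edist p.1 p.2 ^ 2 := measurable_edist.pow_const 2
  have := hπ.isFiniteMeasure
  obtain ⟨ρ, hρν, hρπ⟩ := exists_lift_of_map_snd_eq_map hz hπ.2
  have hcoupling : IsCoupling (ρ.map (Prod.map id y)) μ (ν.map y) := by
    constructor
    · rw [← hπ.1, ← hρπ, Measure.map_map measurable_fst (measurable_id.prodMap hy),
        Measure.map_map measurable_fst (measurable_id.prodMap hz)]
      rfl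
    · rw [← hρν, Measure.map_map measurable_snd (measurable_id.prodMap hy),
        Measure.map_map hy measurable_snd]
      rfl
  calc W2sq μ (ν.map y) ^ (1 / 2 : ℝ)
      ≤ (∫⁻ p, edist p.1 p.2 ^ 2 ∂(ρ.map (Prod.map id y))) ^ (1 / 2 : ℝ) := by
        gcongr
        exact iInf₂_le (ρ.map (Prod.map id y)) hcoupling
    _ = (∫⁻ q, edist q.1 (y q.2) ^ 2 ∂ρ) ^ (1 / 2 : ℝ) := by
        rw [lintegral_map hcost (measurable_id.prodMap hy)]
        rfl
    _ ≤ (∫⁻ q, edist q.1 (z q.2) ^ 2 ∂ρ) ^ (1 / 2 : ℝ) +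
          (∫⁻ q, edist (z q.2) (y q.2) ^ 2 ∂ρ) ^ (1 / 2 : ℝ) :=
        lintegral_sq_rpow_le_of_le_add (by fun_prop) (by fun_prop) fun q => edist_triangle _ _ _
    _ = (∫⁻ p, edist p.1 p.2 ^ 2 ∂π) ^ (1 / 2 : ℝ) +
          (∫⁻ c, edist (z c) (y c) ^ 2 ∂ν) ^ (1 / 2 : ℝ) := by
        rw [← hρπ, ← hρν, lintegral_map hcost (measurable_id.prodMap hz),
          lintegral_map (by fun_prop) measurable_snd]
        rfl

theorem W2sq_map_rpow_le (ν : Measure γ) [SFinite ν] {y z : γ → Ω}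
    (hy : Measurable y) (hz : Measurable z) :
    W2sq μ (ν.map y) ^ (1 / 2 : ℝ) ≤
      W2sq μ (ν.map z) ^ (1 / 2 : ℝ) + (∫⁻ c, edist (z c) (y c) ^ 2 ∂ν) ^ (1 / 2 : ℝ) := by
  rw [W2sq_rpow_eq_iInf μ (ν.map z), ENNReal.iInf_add]
  refine le_iInf fun π => ?_
  rw [ENNReal.iInf_add]
  exact le_iInf (W2sq_map_rpow_le_of_isCoupling μ ν hy hz)

theorem W2sq_empMeasure_rpow_le {N : ℕ} (y z : Fin N → Ω) :
    W2sq μ (empMeasure y) ^ (1 / 2 : ℝ) ≤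
      W2sq μ (empMeasure z) ^ (1 / 2 : ℝ) + ((∑ n, edist (z n) (y n) ^ 2) / N) ^ (1 / 2 : ℝ) := by
  have h := W2sq_map_rpow_le μ (empMeasure (id : Fin N → Fin N))
    (measurable_of_finite y) (measurable_of_finite z)
  rwa [map_empMeasure (measurable_of_finite y), map_empMeasure (measurable_of_finite z),
    lintegral_empMeasure] at h

theorem abs_sqrt_mul_W2_empMeasure_sub_le {N : ℕ} (y z : Fin N → Ω) :
    |√N * W2 μ (empMeasure y) - √N * W2 μ (empMeasure z)| ≤ √(∑ n, dist (y n) (z n) ^ 2) := by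
  rcases Nat.eq_zero_or_pos N with rfl | hN
  · simp
  have hyz := W2sq_empMeasure_rpow_le μ y z
  have hzy := W2sq_empMeasure_rpow_le μ z y
  simp only [edist_comm (z _)] at hyz
  calc |√N * W2 μ (empMeasure y) - √N * W2 μ (empMeasure z)|
      = √N * |W2 μ (empMeasure y) - W2 μ (empMeasure z)| := by
        rw [← mul_sub, abs_mul, abs_of_nonneg (Real.sqrt_nonneg _)]
    _ ≤ √N * √((∑ n, dist (y n) (z n) ^ 2) / N) := by
        rw [W2_eq_toReal_rpow, W2_eq_toReal_rpow, ← toReal_sum_edist_sq_div_rpow]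
        gcongr
        refine ENNReal.abs_toReal_sub_toReal_le ?_ hyz hzy
        exact ENNReal.rpow_ne_top_of_nonneg (by norm_num)
          (ENNReal.div_ne_top (ENNReal.sum_ne_top.2 fun n _ => by finiteness) (by simp [hN.ne']))
    _ = √(∑ n, dist (y n) (z n) ^ 2) := by
        rw [← Real.sqrt_mul (Nat.cast_nonneg N), mul_div_cancel₀ _ (by positivity)]

end Polish

end

theorem empirical_wasserstein_concentration_general
    {Ω : Type*} [MetricSpace Ω] [PolishSpace Ω] [MeasurableSpace Ω] [BorelSpace Ω]
    (μ : Measure Ω) [IsProbabilityMeasure μ] (c : ℝ)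
    (hconc : ∀ n : ℕ, 1 ≤ n → ∀ F : (Fin n → Ω) → ℝ,
      (∀ y z : Fin n → Ω, |F y - F z| ≤ Real.sqrt (∑ i, dist (y i) (z i) ^ 2)) →
      Integrable F (Measure.pi fun _ : Fin n => μ) →
      ∀ x : ℝ, 0 < x →
        (Measure.pi fun _ : Fin n => μ)
            {y | x < |F y - ∫ z, F z ∂(Measure.pi fun _ : Fin n => μ)|} ≤
          ENNReal.ofReal (2 * Real.exp (-c * x ^ 2)))
    (hWint : ∀ N : ℕ, 1 ≤ N →
      Integrable (fun y : Fin N → Ω => W2 μ (empMeasure y)) (Measure.pi fun _ : Fin N => μ)) :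
    ∀ N : ℕ, 1 ≤ N → ∀ x : ℝ, 0 < x →
      (Measure.pi fun _ : Fin N => μ)
          {y | x ≤ |W2 μ (empMeasure y) -
            ∫ z, W2 μ (empMeasure z) ∂(Measure.pi fun _ : Fin N => μ)|} ≤
        ENNReal.ofReal (2 * Real.exp (-c * x ^ 2 * N)) := by
  intro N hN x hx
  have := nonempty_of_isProbabilityMeasure μ
  have hsqrtN : 0 < √(N : ℝ) := by positivity
  have hcont : Continuous fun s : ℝ => ENNReal.ofReal (2 * Real.exp (-c * s ^ 2 * N)) :=
    ENNReal.continuous_ofReal.comp (by fun_prop)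
  -- `hconc` bounds the event `s < |⋯|`, so the event `x ≤ |⋯|` is reached as `s ↑ x`.
  refine measure_setOf_le_le_of_forall_lt _ _ hcont.continuousWithinAt hx fun s hs => ?_
  have hbound := hconc N hN (fun y => √N * W2 μ (empMeasure y))
    (abs_sqrt_mul_W2_empMeasure_sub_le μ) ((hWint N hN).const_mul _) (√N * s)
    (mul_pos hsqrtN hs.1)
  convert hbound using 3
  · ext y
    rw [integral_const_mul, ← mul_sub, abs_mul, abs_of_pos hsqrtN, mul_lt_mul_iff_right₀ hsqrtN]
  · rw [mul_pow, Real.sq_sqrt (Nat.cast_nonneg N)]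
    congr 1
    ring

/-- Gozlan's dimension-free concentration implies concentration of the 2-Wasserstein
distance between the true measure and the empirical measure of `N` i.i.d. samples. -/
theorem empirical_wasserstein_concentration
    {Ω : Type*} [MetricSpace Ω] [PolishSpace Ω] [MeasurableSpace Ω] [BorelSpace Ω]
    (μ : Measure Ω) [IsProbabilityMeasure μ] (c : ℝ) (hc : 0 < c)
    (hconc : ∀ n : ℕ, 1 ≤ n → ∀ F : (Fin n → Ω) → ℝ,
      (∀ y z : Fin n → Ω, |F y - F z| ≤ Real.sqrt (∑ i, dist (y i) (z i) ^ 2)) →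
      Integrable F (Measure.pi fun _ : Fin n => μ) →
      ∀ x : ℝ, 0 < x →
        (Measure.pi fun _ : Fin n => μ)
            {y | x < |F y - ∫ z, F z ∂(Measure.pi fun _ : Fin n => μ)|} ≤
          ENNReal.ofReal (2 * Real.exp (-c * x ^ 2)))
    (hWint : ∀ N : ℕ, 1 ≤ N →
      Integrable (fun y : Fin N → Ω => W2 μ (empMeasure y)) (Measure.pi fun _ : Fin N => μ)) :
    ∀ N : ℕ, 1 ≤ N → ∀ x : ℝ, 0 < x →
      (Measure.pi fun _ : Fin N => μ)
          {y | x ≤ |W2 μ (empMeasure y) -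
            ∫ z, W2 μ (empMeasure z) ∂(Measure.pi fun _ : Fin N => μ)|} ≤
        ENNReal.ofReal (2 * Real.exp (-c * x ^ 2 * N)) :=
  empirical_wasserstein_concentration_general μ c hconc hWint
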